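/- arXiv:1506.04703 — 8 statements merged into one kernel-verified Lean document; each statement's English description precedes it below -/
import Mathlib

section
/- Let n ≥ 1, let t₁, t₂ ∈ GL_n(F) be invertible diagonal matrices, and let u₁, u₂ ∈ GL_n(F) be unipotent upper triangular matrices. If the matrix u₂⁻¹ t₂⁻¹ t₁ u₁ lies in GL_n(𝒪), i.e. both it and its inverse have all entries in 𝒪, then the diagonal matrix t₂⁻¹ t₁ lies in GL_n(𝒪), i.e. every diagonal entry of t₂⁻¹ t₁ is a unit of 𝒪. (Hence the map sending the coset g·GL_n(𝒪) of g = t·u to the coset t·T(𝒪), where T is the diagonal torus, is well defined.) -/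
noncomputable section

/-- An element of `F = k((t))` is integral if it lies in `𝒪 = k[[t]]`,
i.e. all coefficients in negative degrees vanish. -/
def IsIntegral' {k : Type*} [Field k] (x : LaurentSeries k) : Prop :=
  ∀ m : ℤ, m < 0 → x.coeff m = 0

/-- A matrix is unipotent upper triangular if it is upper triangular with all
diagonal entries equal to `1`. -/
def IsUnipotentUpper {R : Type*} [CommRing R] {n : ℕ}
    (u : Matrix (Fin n) (Fin n) R) : Prop :=
  (∀ i j : Fin n, j < i → u i j = 0) ∧ ∀ i : Fin n, u i i = 1

section aux
variable {R : Type*} [CommRing R] {n : ℕ}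

lemma tri_diag_mul (A B : Matrix (Fin n) (Fin n) R)
    (hA : ∀ i j : Fin n, j < i → A i j = 0)
    (hB : ∀ i j : Fin n, j < i → B i j = 0) (i : Fin n) :
    (A * B) i i = A i i * B i i := by
  rw [Matrix.mul_apply]
  apply Finset.sum_eq_single i
  · intro j _ hj
    rcases lt_or_gt_of_ne hj with h | h
    · rw [hA i j h, zero_mul]
    · rw [hB j i h, mul_zero]
  · intro h; exact absurd (Finset.mem_univ i) h

lemma tri_mul (A B : Matrix (Fin n) (Fin n) R)
    (hA : ∀ i j : Fin n, j < i → A i j = 0)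
    (hB : ∀ i j : Fin n, j < i → B i j = 0) :
    ∀ i j : Fin n, j < i → (A * B) i j = 0 := by
  intro i j hij
  rw [Matrix.mul_apply]
  apply Finset.sum_eq_zero
  intro l _
  rcases lt_or_ge l i with h | h
  · rw [hA i l h, zero_mul]
  · rw [hB l j (lt_of_lt_of_le hij h), mul_zero]

end aux

/-- if `t₁, t₂` are invertible diagonal matrices over `F = k((t))`,
`u₁, u₂` are unipotent upper triangular, and `u₂⁻¹ t₂⁻¹ t₁ u₁ ∈ GL_n(𝒪)`
(it and its inverse are entrywise integral), then `t₂⁻¹ t₁ ∈ GL_n(𝒪)`, i.e. every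
diagonal entry of `t₂⁻¹ t₁` is a unit of `𝒪`. -/
theorem diagonal_part_integral {k : Type*} [Field k] {n : ℕ} (hn : 1 ≤ n)
    (t₁ t₂ u₁ u₂ : Matrix (Fin n) (Fin n) (LaurentSeries k))
    (ht₁d : t₁.IsDiag) (ht₂d : t₂.IsDiag) (ht₁ : IsUnit t₁) (ht₂ : IsUnit t₂)
    (hu₁ : IsUnipotentUpper u₁) (hu₂ : IsUnipotentUpper u₂)
    (hint : ∀ i j : Fin n, IsIntegral' ((u₂⁻¹ * t₂⁻¹ * t₁ * u₁) i j))
    (hintinv : ∀ i j : Fin n, IsIntegral' ((u₂⁻¹ * t₂⁻¹ * t₁ * u₁)⁻¹ i j)) :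
    (∀ i : Fin n, IsIntegral' ((t₂⁻¹ * t₁) i i) ∧ IsIntegral' (((t₂⁻¹ * t₁) i i)⁻¹)) := by
  classical
  have ht₁tri : ∀ i j : Fin n, j < i → t₁ i j = 0 := fun i j h => ht₁d (ne_of_gt h)
  have ht₂tri : ∀ i j : Fin n, j < i → t₂ i j = 0 := fun i j h => ht₂d (ne_of_gt h)
  have hdetu : ∀ u : Matrix (Fin n) (Fin n) (LaurentSeries k),
      IsUnipotentUpper u → u.det = 1 := by
    intro u hu
    rw [Matrix.det_of_upperTriangular (fun i j (h : (j : Fin n) < i) => hu.1 i j h)]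
    simp [hu.2]
  have hu₁det : IsUnit u₁.det := by rw [hdetu u₁ hu₁]; exact isUnit_one
  have hu₂det : IsUnit u₂.det := by rw [hdetu u₂ hu₂]; exact isUnit_one
  have hinvtri : ∀ u : Matrix (Fin n) (Fin n) (LaurentSeries k), IsUnit u.det →
      (∀ i j : Fin n, j < i → u i j = 0) → ∀ i j : Fin n, j < i → u⁻¹ i j = 0 := by
    intro u hdet htri i j hij
    haveI := u.invertibleOfIsUnitDet hdet
    exact Matrix.blockTriangular_inv_of_blockTriangular
      (fun a b (h : (b : Fin n) < a) => htri a b h) hij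
  have hu₁invtri := hinvtri u₁ hu₁det hu₁.1
  have hu₂invtri := hinvtri u₂ hu₂det hu₂.1
  have ht₁invtri := hinvtri t₁ (t₁.isUnit_iff_isUnit_det.mp ht₁) ht₁tri
  have ht₂invtri := hinvtri t₂ (t₂.isUnit_iff_isUnit_det.mp ht₂) ht₂tri
  -- diagonal entries of inverses
  have hinvdiag : ∀ u : Matrix (Fin n) (Fin n) (LaurentSeries k),
      IsUnit u.det → (∀ i j : Fin n, j < i → u i j = 0) →
      ∀ i : Fin n, u⁻¹ i i * u i i = 1 := by
    intro u hd htri i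
    have h1 : (u⁻¹ * u) i i = 1 := by rw [Matrix.nonsing_inv_mul u hd]; simp
    rwa [tri_diag_mul u⁻¹ u (hinvtri u hd htri) htri i] at h1
  have huinvone : ∀ u : Matrix (Fin n) (Fin n) (LaurentSeries k),
      IsUnipotentUpper u → ∀ i : Fin n, u⁻¹ i i = 1 := by
    intro u hu i
    have hd : IsUnit u.det := by rw [hdetu u hu]; exact isUnit_one
    have := hinvdiag u hd hu.1 i
    rwa [hu.2 i, mul_one] at this
  have htinvdiag : ∀ t : Matrix (Fin n) (Fin n) (LaurentSeries k),
      t.IsDiag → IsUnit t → ∀ i : Fin n, t⁻¹ i i = (t i i)⁻¹ := by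
    intro t htd htu i
    have htri : ∀ i j : Fin n, j < i → t i j = 0 := fun i j h => htd (ne_of_gt h)
    exact eq_inv_of_mul_eq_one_left
      (hinvdiag t (t.isUnit_iff_isUnit_det.mp htu) htri i)
  set g := u₂⁻¹ * t₂⁻¹ * t₁ * u₁ with hg
  have hgdiag : ∀ i : Fin n, g i i = (t₂⁻¹ * t₁) i i := by
    intro i
    have h1 : g = u₂⁻¹ * (t₂⁻¹ * t₁) * u₁ := by
      rw [hg, mul_assoc u₂⁻¹ t₂⁻¹ t₁]
    rw [h1,
      tri_diag_mul _ u₁ (tri_mul _ _ hu₂invtri (tri_mul _ _ ht₂invtri ht₁tri)) hu₁.1,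
      tri_diag_mul _ _ hu₂invtri (tri_mul _ _ ht₂invtri ht₁tri),
      huinvone u₂ hu₂, hu₁.2, one_mul, mul_one]
  have hginv : g⁻¹ = u₁⁻¹ * (t₁⁻¹ * t₂) * u₂ := by
    rw [hg, Matrix.mul_inv_rev, Matrix.mul_inv_rev, Matrix.mul_inv_rev,
      Matrix.nonsing_inv_nonsing_inv t₂ (t₂.isUnit_iff_isUnit_det.mp ht₂),
      Matrix.nonsing_inv_nonsing_inv u₂ hu₂det]
    simp [mul_assoc]
  have hginvdiag : ∀ i : Fin n, g⁻¹ i i = (t₁ i i)⁻¹ * t₂ i i := by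
    intro i
    rw [hginv,
      tri_diag_mul _ u₂ (tri_mul _ _ hu₁invtri (tri_mul _ _ ht₁invtri ht₂tri)) hu₂.1,
      tri_diag_mul _ _ hu₁invtri (tri_mul _ _ ht₁invtri ht₂tri),
      huinvone u₁ hu₁, hu₂.2, one_mul, mul_one,
      tri_diag_mul _ _ ht₁invtri ht₂tri, htinvdiag t₁ ht₁d ht₁]
  intro i
  have hdi : (t₂⁻¹ * t₁) i i = (t₂ i i)⁻¹ * t₁ i i := by
    rw [tri_diag_mul _ _ ht₂invtri ht₁tri, htinvdiag t₂ ht₂d ht₂]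
  constructor
  · rw [← hgdiag i]; exact hint i i
  · have h2 : ((t₂⁻¹ * t₁) i i)⁻¹ = g⁻¹ i i := by
      rw [hginvdiag i, hdi, mul_inv, inv_inv, mul_comm]
    rw [h2]; exact hintinv i i
end
end

section
/- Let n ≥ 1, let β = diag(x₁,…,x_n) be a diagonal n×n matrix over F, let r and s be invertible diagonal n×n matrices over F, and let v, w ∈ GL_n(F) be unipotent upper triangular matrices. If both matrices v⁻¹ r⁻¹ s w and w⁻¹ s⁻¹ β r v have all their entries in 𝒪, then the diagonal matrices r⁻¹ s and s⁻¹ β r have all their entries in 𝒪. -/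
noncomputable section

section Aux

variable {R : Type*} [CommRing R] {n : ℕ}

/-- Product of (lower-vanishing) upper triangular matrices is upper triangular. -/
lemma ut_mul_ut {A B : Matrix (Fin n) (Fin n) R}
    (hA : ∀ i j, j < i → A i j = 0) (hB : ∀ i j, j < i → B i j = 0) :
    ∀ i j, j < i → (A * B) i j = 0 := by
  intro i j hij
  rw [Matrix.mul_apply]
  apply Finset.sum_eq_zero
  intro l _
  rcases lt_or_ge l i with h | h
  · rw [hA i l h, zero_mul]
  · rw [hB l j (lt_of_lt_of_le hij h), mul_zero]

/-- Diagonal entries of a product of upper triangular matrices. -/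
lemma ut_mul_diag {A B : Matrix (Fin n) (Fin n) R}
    (hA : ∀ i j, j < i → A i j = 0) (hB : ∀ i j, j < i → B i j = 0) (i : Fin n) :
    (A * B) i i = A i i * B i i := by
  rw [Matrix.mul_apply]
  apply Finset.sum_eq_single_of_mem i (Finset.mem_univ i)
  intro l _ hl
  rcases lt_or_gt_of_ne hl with h | h
  · rw [hA i l h, zero_mul]
  · rw [hB l i h, mul_zero]

lemma isDiag_ut {A : Matrix (Fin n) (Fin n) R} (hA : A.IsDiag) :
    ∀ i j, j < i → A i j = 0 := fun _ _ h => hA h.ne'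

lemma isDiag_mul {A B : Matrix (Fin n) (Fin n) R} (hA : A.IsDiag) (hB : B.IsDiag) :
    (A * B).IsDiag := by
  intro i j hij
  rw [Matrix.mul_apply]
  apply Finset.sum_eq_zero
  intro l _
  by_cases h : l = i
  · subst h; rw [hB hij, mul_zero]
  · rw [hA (Ne.symm h), zero_mul]

lemma isDiag_inv {K : Type*} [Field K] {A : Matrix (Fin n) (Fin n) K}
    (hA : A.IsDiag) : (A⁻¹).IsDiag := by
  rw [← hA.diagonal_diag, Matrix.inv_diagonal]
  exact Matrix.isDiag_diagonal _

lemma unip_inv {K : Type*} [Field K] {v : Matrix (Fin n) (Fin n) K}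
    (hv : IsUnipotentUpper v) : IsUnipotentUpper v⁻¹ := by
  have hdet : v.det = 1 := by
    rw [Matrix.det_of_upperTriangular (fun i j h => hv.1 i j h)]
    simp [hv.2]
  have hu : IsUnit v.det := by rw [hdet]; exact isUnit_one
  have : Invertible v := v.invertibleOfIsUnitDet hu
  have hut : ∀ i j, j < i → v⁻¹ i j = 0 := by
    have := Matrix.blockTriangular_inv_of_blockTriangular
      (M := v) (b := (id : Fin n → Fin n)) (fun i j h => hv.1 i j h)
    exact fun i j h => this h
  refine ⟨hut, fun i => ?_⟩
  have h1 : (v⁻¹ * v) i i = v⁻¹ i i * v i i := ut_mul_diag hut hv.1 i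
  rw [Matrix.nonsing_inv_mul v hu] at h1
  have := h1.symm
  rwa [hv.2 i, mul_one, Matrix.one_apply_eq] at this

lemma isIntegral'_zero {k : Type*} [Field k] : IsIntegral' (0 : LaurentSeries k) := by
  intro m _; simp

end Aux

/-- let `β = diag(x₁,…,x_n)` over `F = k((t))`, let `r, s` be invertible
diagonal matrices, and `v, w` unipotent upper triangular. If `v⁻¹ r⁻¹ s w` and
`w⁻¹ s⁻¹ β r v` have all entries in `𝒪`, then `r⁻¹ s` and `s⁻¹ β r` have all
entries in `𝒪`. -/
theorem iwasawa_projection_integral {k : Type*} [Field k] {n : ℕ} (hn : 1 ≤ n)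
    (x : Fin n → LaurentSeries k)
    (r s v w : Matrix (Fin n) (Fin n) (LaurentSeries k))
    (hrd : r.IsDiag) (hsd : s.IsDiag) (hr : IsUnit r) (hs : IsUnit s)
    (hv : IsUnipotentUpper v) (hw : IsUnipotentUpper w)
    (h₁ : ∀ i j : Fin n, IsIntegral' ((v⁻¹ * r⁻¹ * s * w) i j))
    (h₂ : ∀ i j : Fin n, IsIntegral' ((w⁻¹ * s⁻¹ * Matrix.diagonal x * r * v) i j)) :
    (∀ i j : Fin n, IsIntegral' ((r⁻¹ * s) i j)) ∧
      (∀ i j : Fin n, IsIntegral' ((s⁻¹ * Matrix.diagonal x * r) i j)) := by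
  have hv' := unip_inv hv
  have hw' := unip_inv hw
  have hrd' := isDiag_inv hrd
  have hsd' := isDiag_inv hsd
  have hxd : (Matrix.diagonal x).IsDiag := Matrix.isDiag_diagonal x
  have hvU := hv'.1
  have hwU' := hw'.1
  have hrU := isDiag_ut hrd'
  have hsU := isDiag_ut hsd
  have hsU' := isDiag_ut hsd'
  have hrU2 := isDiag_ut hrd
  have hxU := isDiag_ut hxd
  constructor
  · -- r⁻¹ * s
    have hD : (r⁻¹ * s).IsDiag := isDiag_mul hrd' hsd
    intro i j
    by_cases hij : i = j
    · subst hij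
      have e1 : (v⁻¹ * r⁻¹ * s * w) i i = r⁻¹ i i * s i i := by
        rw [ut_mul_diag (ut_mul_ut (ut_mul_ut hvU hrU) hsU) hw.1 i,
          ut_mul_diag (ut_mul_ut hvU hrU) hsU i, ut_mul_diag hvU hrU i,
          hv'.2 i, hw.2 i, one_mul, mul_one]
      have e2 : (r⁻¹ * s) i i = r⁻¹ i i * s i i := ut_mul_diag hrU hsU i
      rw [e2, ← e1]
      exact h₁ i i
    · rw [hD hij]
      exact isIntegral'_zero
  · -- s⁻¹ * diagonal x * r
    have hD : (s⁻¹ * Matrix.diagonal x * r).IsDiag := isDiag_mul (isDiag_mul hsd' hxd) hrd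
    intro i j
    by_cases hij : i = j
    · subst hij
      have e1 : (w⁻¹ * s⁻¹ * Matrix.diagonal x * r * v) i i
          = s⁻¹ i i * Matrix.diagonal x i i * r i i := by
        rw [ut_mul_diag (ut_mul_ut (ut_mul_ut (ut_mul_ut hwU' hsU') hxU) hrU2) hv.1 i,
          ut_mul_diag (ut_mul_ut (ut_mul_ut hwU' hsU') hxU) hrU2 i,
          ut_mul_diag (ut_mul_ut hwU' hsU') hxU i, ut_mul_diag hwU' hsU' i,
          hw'.2 i, hv.2 i, one_mul, mul_one]
      have e2 : (s⁻¹ * Matrix.diagonal x * r) i i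
          = s⁻¹ i i * Matrix.diagonal x i i * r i i := by
        rw [ut_mul_diag (ut_mul_ut hsU' hxU) hrU2 i, ut_mul_diag hsU' hxU i]
      rw [e2, ← e1]
      exact h₂ i i
    · rw [hD hij]
      exact isIntegral'_zero
end
end

section
/- Let n ≥ 1, let r₁,…,r_n, s₁,…,s_n be nonzero elements of a field F and let x₁,…,x_n ∈ F. Set A = diag(r₁⁻¹s₁,…,r_n⁻¹s_n) and B = diag(s₁⁻¹r₁x₁,…,s_n⁻¹r_nx_n), and let φ be the F-linear endomorphism of 𝔫ₙ(F) × 𝔫ₙ(F) given by φ(P,Q) = (AQ − PA, BP − QB). Then det φ = (−1)^{n(n−1)/2} · ∏_{i<j} (x_i − x_j). In particular, det φ does not depend on r₁,…,r_n, s₁,…,s_n. -/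
noncomputable section

open Matrix

variable (F : Type*) [Field F] (n : ℕ)

/-- `𝔫ₙ(F)`: the space of strictly upper triangular `n × n` matrices over `F`. -/
def strictUpper : Submodule F (Matrix (Fin n) (Fin n) F) where
  carrier := {M | ∀ i j : Fin n, j ≤ i → M i j = 0}
  add_mem' := by
    intro a b ha hb i j h
    simp [Matrix.add_apply, ha i j h, hb i j h]
  zero_mem' := by intro i j h; simp
  smul_mem' := by
    intro c M hM i j h
    simp [Matrix.smul_apply, hM i j h]

variable {F n}

/-- The linear endomorphism `(P, Q) ↦ (AQ - PA, BP - QB)` of the space of pairs of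
matrices. -/
def phiFull (A B : Matrix (Fin n) (Fin n) F) :
    (Matrix (Fin n) (Fin n) F × Matrix (Fin n) (Fin n) F) →ₗ[F]
      (Matrix (Fin n) (Fin n) F × Matrix (Fin n) (Fin n) F) where
  toFun PQ := (A * PQ.2 - PQ.1 * A, B * PQ.1 - PQ.2 * B)
  map_add' z z' := by
    refine Prod.ext ?_ ?_ <;> simp [mul_add, add_mul] <;> abel
  map_smul' c z := by
    refine Prod.ext ?_ ?_ <;> simp [Matrix.mul_smul, Matrix.smul_mul, smul_sub]

lemma phiFull_maps_strictUpper (a b : Fin n → F) :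
    ∀ z ∈ (strictUpper F n).prod (strictUpper F n),
      phiFull (Matrix.diagonal a) (Matrix.diagonal b) z ∈
        (strictUpper F n).prod (strictUpper F n) := by
  rintro ⟨P, Q⟩ hz
  rw [Submodule.mem_prod] at hz ⊢
  obtain ⟨hP, hQ⟩ := hz
  have hP' : ∀ i j : Fin n, j ≤ i → P i j = 0 := hP
  have hQ' : ∀ i j : Fin n, j ≤ i → Q i j = 0 := hQ
  constructor
  · intro i j h
    simp [phiFull, Matrix.sub_apply, Matrix.diagonal_mul, Matrix.mul_diagonal,
      hP' i j h, hQ' i j h]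
  · intro i j h
    simp [phiFull, Matrix.sub_apply, Matrix.diagonal_mul, Matrix.mul_diagonal,
      hP' i j h, hQ' i j h]

/-- The endomorphism `φ(P,Q) = (AQ - PA, BP - QB)` of `𝔫ₙ(F) × 𝔫ₙ(F)`, where
`A = diag(a₁,…,aₙ)` and `B = diag(b₁,…,bₙ)`. -/
def phi (a b : Fin n → F) :
    ((strictUpper F n).prod (strictUpper F n)) →ₗ[F]
      ((strictUpper F n).prod (strictUpper F n)) :=
  (phiFull (Matrix.diagonal a) (Matrix.diagonal b)).restrict
    (phiFull_maps_strictUpper a b)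

variable (n) in
/-- Index for pairs `i < j`. -/
abbrev PairIdx := {p : Fin n × Fin n // p.1 < p.2}

/-- Forward map: extract the above-diagonal entries of a pair of strictly upper
triangular matrices. -/
def fwdMap : ((strictUpper F n).prod (strictUpper F n)) →ₗ[F] (Fin 2 × PairIdx n → F) where
  toFun z := fun kp =>
    if kp.1 = 0 then z.1.1 kp.2.1.1 kp.2.1.2 else z.1.2 kp.2.1.1 kp.2.1.2
  map_add' z z' := by
    funext kp
    by_cases h : kp.1 = 0 <;> simp [h]
  map_smul' c z := by
    funext kp
    by_cases h : kp.1 = 0 <;> simp [h]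

/-- Inverse map: build a pair of strictly upper triangular matrices from their entries. -/
def invMap : (Fin 2 × PairIdx n → F) →ₗ[F] ((strictUpper F n).prod (strictUpper F n)) where
  toFun f := ⟨(Matrix.of fun i j => if h : i < j then f (0, ⟨(i, j), h⟩) else 0,
               Matrix.of fun i j => if h : i < j then f (1, ⟨(i, j), h⟩) else 0), by
    constructor <;> · intro i j h
                      exact dif_neg (not_lt.2 h)⟩
  map_add' f g := by
    refine Subtype.ext (Prod.ext ?_ ?_) <;>
    · ext i j
      simp only [Submodule.coe_add, Prod.fst_add, Prod.snd_add, Matrix.add_apply,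
        Matrix.of_apply, Pi.add_apply]
      by_cases h : i < j <;> simp [h]
  map_smul' c f := by
    refine Subtype.ext (Prod.ext ?_ ?_) <;>
    · ext i j
      simp only [Submodule.coe_smul, Prod.smul_fst, Prod.smul_snd, Matrix.smul_apply,
        Matrix.of_apply, Pi.smul_apply, smul_eq_mul, RingHom.id_apply]
      by_cases h : i < j <;> simp [h]

lemma fwd_inv (f : Fin 2 × PairIdx n → F) : fwdMap (invMap f) = f := by
  funext kp
  obtain ⟨k, p⟩ := kp
  fin_cases k <;>
    simp [fwdMap, invMap, p.2, dif_pos, Prod.mk.eta, Subtype.coe_eta]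

lemma inv_fwd (z : ((strictUpper F n).prod (strictUpper F n))) : invMap (fwdMap z) = z := by
  refine Subtype.ext (Prod.ext ?_ ?_) <;>
  · ext i j
    by_cases h : i < j
    · simp [fwdMap, invMap, h]
    · simp only [invMap, LinearMap.coe_mk, AddHom.coe_mk, Matrix.of_apply, dif_neg h]
      first
      | exact (z.2.1 i j (not_lt.1 h)).symm
      | exact (z.2.2 i j (not_lt.1 h)).symm

/-- The coordinate linear equivalence. -/
def coordEquiv : ((strictUpper F n).prod (strictUpper F n)) ≃ₗ[F] (Fin 2 × PairIdx n → F) :=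
  LinearEquiv.ofLinear fwdMap invMap (LinearMap.ext fwd_inv) (LinearMap.ext inv_fwd)

/-- The `2 × 2` block of `φ` over the pair `p`. -/
def blockMat (a b : Fin n → F) (p : PairIdx n) : Matrix (Fin 2) (Fin 2) F :=
  !![- a p.1.2, a p.1.1; b p.1.1, - b p.1.2]

lemma toMatrix_conj_phi (a b : Fin n → F) :
    LinearMap.toMatrix' (coordEquiv.conj (phi a b)) = Matrix.blockDiagonal (blockMat a b) := by
  ext ⟨k, p⟩ ⟨l, q⟩
  rw [LinearMap.toMatrix'_apply, LinearEquiv.conj_apply]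
  simp only [LinearMap.coe_comp, Function.comp_apply, LinearEquiv.coe_coe, coordEquiv,
    LinearEquiv.ofLinear_symm_apply, LinearEquiv.ofLinear_apply]
  have hq := q.2
  fin_cases k <;> fin_cases l <;>
  · simp only [phi, fwdMap, invMap, LinearMap.coe_mk, AddHom.coe_mk,
      LinearMap.restrict_coe_apply, phiFull, Matrix.sub_apply, Matrix.diagonal_mul,
      Matrix.mul_diagonal, Matrix.of_apply, Matrix.blockDiagonal_apply, blockMat,
      dif_pos p.2]
    by_cases hpq : p = q <;>
      simp [hpq, Prod.ext_iff, Subtype.ext_iff, Prod.mk.eta, Subtype.coe_eta,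
        mul_comm]

lemma prod_pairIdx (f : Fin n → Fin n → F) :
    ∏ p : PairIdx n, f p.1.1 p.1.2 = ∏ i : Fin n, ∏ j ∈ Finset.Ioi i, f i j := by
  rw [← Finset.prod_subtype (Finset.univ.filter fun p : Fin n × Fin n => p.1 < p.2)
    (by simp) (fun p => f p.1 p.2), Finset.prod_filter, ← Finset.univ_product_univ,
    Finset.prod_product]
  refine Finset.prod_congr rfl fun i _ => ?_
  rw [Finset.prod_filter (fun j => i < j) (f i) |>.symm]
  congr 1
  ext j
  simp [Finset.mem_Ioi]

lemma card_pairIdx : Fintype.card (PairIdx n) = n * (n - 1) / 2 := by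
  have h1 : Fintype.card (PairIdx n)
      = ∑ i : Fin n, (Finset.Ioi i).card := by
    rw [Fintype.card_subtype, Finset.card_filter, ← Finset.univ_product_univ,
      Finset.sum_product]
    refine Finset.sum_congr rfl fun i _ => ?_
    rw [Finset.card_eq_sum_ones, Finset.sum_filter (fun j => i < j) (fun _ => 1) |>.symm]
    congr 1
    ext j
    simp [Finset.mem_Ioi]
  rw [h1]
  have h2 : ∀ i : Fin n, (Finset.Ioi i).card = n - 1 - (i : ℕ) := fun i => Fin.card_Ioi i
  calc ∑ i : Fin n, (Finset.Ioi i).card = ∑ i ∈ Finset.range n, (n - 1 - i) := by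
        rw [Finset.sum_congr rfl fun i _ => h2 i, Fin.sum_univ_eq_sum_range]
    _ = ∑ i ∈ Finset.range n, i := Finset.sum_range_reflect (fun j => j) n
    _ = n * (n - 1) / 2 := Finset.sum_range_id n

/-- with `A = diag(rᵢ⁻¹sᵢ)` and `B = diag(sᵢ⁻¹rᵢxᵢ)`, the determinant of
`φ : 𝔫ₙ(F) × 𝔫ₙ(F) → 𝔫ₙ(F) × 𝔫ₙ(F)`, `φ(P,Q) = (AQ - PA, BP - QB)`, equals
`(-1)^(n(n-1)/2) ∏_{i<j} (xᵢ - xⱼ)`; in particular it does not depend on `r`, `s`. -/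
theorem det_phi_eq {F : Type*} [Field F] {n : ℕ} (hn : 1 ≤ n)
    (r s x : Fin n → F) (hr : ∀ i, r i ≠ 0) (hs : ∀ i, s i ≠ 0) :
    LinearMap.det (phi (fun i => (r i)⁻¹ * s i) (fun i => (s i)⁻¹ * r i * x i)) =
      (-1 : F) ^ (n * (n - 1) / 2) *
        ∏ i : Fin n, ∏ j ∈ Finset.Ioi i, (x i - x j) := by
  set a : Fin n → F := fun i => (r i)⁻¹ * s i with ha
  set b : Fin n → F := fun i => (s i)⁻¹ * r i * x i with hb
  rw [← LinearMap.det_conj (phi a b) coordEquiv, ← LinearMap.det_toMatrix']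
  have h := toMatrix_conj_phi a b
  rw [LinearEquiv.conj_apply] at h
  rw [LinearMap.comp_assoc] at h
  rw [h, Matrix.det_blockDiagonal]
  have hdet : ∀ p : PairIdx n, (blockMat a b p).det = x p.1.2 - x p.1.1 := by
    intro p
    have hab : ∀ i, a i * b i = x i := by
      intro i
      show (r i)⁻¹ * s i * ((s i)⁻¹ * r i * x i) = x i
      rw [show (r i)⁻¹ * s i * ((s i)⁻¹ * r i * x i)
          = (s i * (s i)⁻¹) * ((r i)⁻¹ * r i) * x i by ring,
        mul_inv_cancel₀ (hs i), inv_mul_cancel₀ (hr i), one_mul, one_mul]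
    rw [blockMat, Matrix.det_fin_two_of]
    rw [show -a p.1.2 * -b p.1.2 = a p.1.2 * b p.1.2 by ring, hab, hab]
  rw [Finset.prod_congr rfl fun p _ => hdet p]
  have : ∀ p : PairIdx n, x p.1.2 - x p.1.1 = (-1) * (x p.1.1 - x p.1.2) := fun p => by ring
  rw [Finset.prod_congr rfl fun p _ => this p, Finset.prod_mul_distrib, Finset.prod_const,
    Finset.card_univ, card_pairIdx, prod_pairIdx fun i j => x i - x j]
end
end

section
/- Let n ≥ 1, let r₁,…,r_n, s₁,…,s_n be nonzero elements of F = k((t)) and let x₁,…,x_n ∈ F be pairwise distinct. Set A = diag(r₁⁻¹s₁,…,r_n⁻¹s_n) and B = diag(s₁⁻¹r₁x₁,…,s_n⁻¹r_nx_n), and let φ be the F-linear endomorphism of 𝔫ₙ(F) × 𝔫ₙ(F) given by φ(P,Q) = (AQ − PA, BP − QB). Then det φ ≠ 0 and v(det φ) = Σ_{i<j} v(x_i − x_j). -/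
noncomputable section

open Matrix

variable (F : Type*) [Field F] (n : ℕ)

variable {F n}

/-- The determinant of `φ`. -/
def phiDet (a b : Fin n → F) : F := LinearMap.det (phi a b)

/-! In the coordinates given by the entries above the diagonal, `φ` decouples into `2 × 2`
blocks: the `(i, j)` entries of `P` and `Q` are mapped by `[[-aⱼ, aᵢ], [bᵢ, -bⱼ]]`, whose
determinant is `aⱼbⱼ - aᵢbᵢ`. Since `aᵢbᵢ = xᵢ` here, `det φ = ∏_{i<j} (xⱼ - xᵢ)`, and the
`t`-adic order is additive on products of nonzero Laurent series. -/

lemma Matrix.blockDiagonal_mulVec_apply {m o α : Type*} [Fintype m] [Fintype o] [DecidableEq o]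
    [NonUnitalNonAssocSemiring α] (M : o → Matrix m m α) (v : m × o → α) (i : m) (k : o) :
    (blockDiagonal M *ᵥ v) (i, k) = ∑ j, M k i j * v (j, k) := by
  simp [mulVec, dotProduct, Fintype.sum_prod_type, blockDiagonal_apply']

lemma Fintype.sum_subtype_lt {ι M : Type*} [Fintype ι] [LinearOrder ι] [LocallyFiniteOrderTop ι]
    [AddCommMonoid M] (g : ι → ι → M) :
    ∑ p : {p : ι × ι // p.1 < p.2}, g p.1.1 p.1.2 = ∑ i, ∑ j ∈ Finset.Ioi i, g i j := by
  rw [← Finset.sum_subtype ({p | p.1 < p.2} : Finset (ι × ι)) (by simp) (fun p => g p.1 p.2),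
    Finset.sum_filter, Fintype.sum_prod_type]
  simp_rw [← Finset.sum_filter, Finset.filter_lt_eq_Ioi]

lemma HahnSeries.order_prod {Γ R ι : Type*} [AddCommMonoid Γ] [LinearOrder Γ]
    [IsOrderedCancelAddMonoid Γ] [CommRing R] [IsDomain R] (s : Finset ι)
    (f : ι → HahnSeries Γ R) (hf : ∀ i ∈ s, f i ≠ 0) :
    (∏ i ∈ s, f i).order = ∑ i ∈ s, (f i).order := by
  induction s using Finset.cons_induction with
  | empty => simp
  | cons i s hi ih =>
    rw [Finset.forall_mem_cons] at hf
    rw [Finset.prod_cons, Finset.sum_cons, order_mul hf.1 (Finset.prod_ne_zero_iff.2 hf.2),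
      ih hf.2]

lemma phiFull_diagonal_fst_apply (a b : Fin n → F)
    (z : Matrix (Fin n) (Fin n) F × Matrix (Fin n) (Fin n) F) (i j : Fin n) :
    (phiFull (diagonal a) (diagonal b) z).1 i j = a i * z.2 i j - z.1 i j * a j := by
  simp [phiFull, diagonal_mul, mul_diagonal]

lemma phiFull_diagonal_snd_apply (a b : Fin n → F)
    (z : Matrix (Fin n) (Fin n) F × Matrix (Fin n) (Fin n) F) (i j : Fin n) :
    (phiFull (diagonal a) (diagonal b) z).2 i j = b i * z.1 i j - z.2 i j * b j := by
  simp [phiFull, diagonal_mul, mul_diagonal]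

abbrev strictUpperIndex (n : ℕ) := {p : Fin n × Fin n // p.1 < p.2}

variable (F n) in
def strictUpperProdEquivFun :
    (strictUpper F n).prod (strictUpper F n) ≃ₗ[F] (Fin 2 × strictUpperIndex n → F) where
  toFun z := fun bp => ![z.1.1, z.1.2] bp.1 bp.2.1.1 bp.2.1.2
  map_add' _ _ := by ext ⟨b, p⟩; fin_cases b <;> rfl
  map_smul' _ _ := by ext ⟨b, p⟩; fin_cases b <;> rfl
  invFun c :=
    ⟨(of fun i j => if h : i < j then c (0, ⟨(i, j), h⟩) else 0,
      of fun i j => if h : i < j then c (1, ⟨(i, j), h⟩) else 0),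
      ⟨fun i j h => by simp [not_lt_of_ge h], fun i j h => by simp [not_lt_of_ge h]⟩⟩
  left_inv := by
    rintro ⟨⟨P, Q⟩, hP, hQ⟩
    ext i j <;> by_cases h : i < j <;> simp [h]
    exacts [(hP i j (le_of_not_gt h)).symm, (hQ i j (le_of_not_gt h)).symm]
  right_inv c := by
    ext ⟨b, ⟨⟨i, j⟩, h⟩⟩
    fin_cases b <;> simp [h]

@[simp]
lemma strictUpperProdEquivFun_apply (z : (strictUpper F n).prod (strictUpper F n)) (β : Fin 2)
    (p : strictUpperIndex n) :
    strictUpperProdEquivFun F n z (β, p) = ![z.1.1, z.1.2] β p.1.1 p.1.2 :=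
  rfl

def phiBlocks (a b : Fin n → F) :
    Matrix (Fin 2 × strictUpperIndex n) (Fin 2 × strictUpperIndex n) F :=
  blockDiagonal fun p => !![-a p.1.2, a p.1.1; b p.1.1, -b p.1.2]

lemma strictUpperProdEquivFun_phi (a b : Fin n → F)
    (z : (strictUpper F n).prod (strictUpper F n)) :
    strictUpperProdEquivFun F n (phi a b z) = phiBlocks a b *ᵥ strictUpperProdEquivFun F n z := by
  ext ⟨β, p⟩
  rw [phiBlocks, blockDiagonal_mulVec_apply, Fin.sum_univ_two]
  fin_cases β <;>
    simp [phi, phiFull_diagonal_fst_apply, phiFull_diagonal_snd_apply, neg_add_eq_sub,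
      ← sub_eq_add_neg, mul_comm]

lemma phiDet_eq_det_phiBlocks (a b : Fin n → F) : phiDet a b = (phiBlocks a b).det := by
  have hconj : (strictUpperProdEquivFun F n).toLinearMap ∘ₗ phi a b ∘ₗ
      (strictUpperProdEquivFun F n).symm.toLinearMap = toLin' (phiBlocks a b) := by
    refine LinearMap.ext fun c => ?_
    simp [strictUpperProdEquivFun_phi]
  rw [phiDet, ← LinearMap.det_toLin', ← hconj, LinearMap.det_conj]

lemma phiDet_eq_prod (a b : Fin n → F) :
    phiDet a b = ∏ p : strictUpperIndex n, (a p.1.2 * b p.1.2 - a p.1.1 * b p.1.1) := by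
  rw [phiDet_eq_det_phiBlocks, phiBlocks, det_blockDiagonal]
  refine Finset.prod_congr rfl fun p _ => ?_
  rw [det_fin_two_of]
  ring

theorem order_det_phi_general {k : Type*} [Field k] {n : ℕ}
    (r s x : Fin n → LaurentSeries k) (hr : ∀ i, r i ≠ 0) (hs : ∀ i, s i ≠ 0)
    (hx : ∀ i j : Fin n, i ≠ j → x i ≠ x j) :
    phiDet (fun i => (r i)⁻¹ * s i) (fun i => (s i)⁻¹ * r i * x i) ≠ 0 ∧
      (phiDet (fun i => (r i)⁻¹ * s i) (fun i => (s i)⁻¹ * r i * x i)).order =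
        ∑ i : Fin n, ∑ j ∈ Finset.Ioi i, (x i - x j).order := by
  have hab : ∀ i, (r i)⁻¹ * s i * ((s i)⁻¹ * r i * x i) = x i := fun i => by
    field_simp [hr i, hs i]
  have hdet : phiDet (fun i => (r i)⁻¹ * s i) (fun i => (s i)⁻¹ * r i * x i) =
      ∏ p : strictUpperIndex n, (x p.1.2 - x p.1.1) := by
    simp only [phiDet_eq_prod, hab]
  have hne : ∀ p : strictUpperIndex n, x p.1.2 - x p.1.1 ≠ 0 := fun p =>
    sub_ne_zero.2 (hx _ _ p.2.ne')
  refine ⟨hdet ▸ Finset.prod_ne_zero_iff.2 fun p _ => hne p, ?_⟩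
  rw [hdet, HahnSeries.order_prod _ _ fun p _ => hne p, ← Fintype.sum_subtype_lt]
  exact Fintype.sum_congr _ _ fun p => by rw [← HahnSeries.order_neg, neg_sub]

/-- over `F = k((t))`, with `A = diag(rᵢ⁻¹sᵢ)`, `B = diag(sᵢ⁻¹rᵢxᵢ)` and the
`xᵢ` pairwise distinct, the determinant of `φ(P,Q) = (AQ - PA, BP - QB)` on
`𝔫ₙ(F) × 𝔫ₙ(F)` is nonzero, and its `t`-adic valuation (`HahnSeries.order`) equals
`Σ_{i<j} v(xᵢ - xⱼ)`. -/
theorem order_det_phi {k : Type*} [Field k] {n : ℕ} (hn : 1 ≤ n)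
    (r s x : Fin n → LaurentSeries k) (hr : ∀ i, r i ≠ 0) (hs : ∀ i, s i ≠ 0)
    (hx : ∀ i j : Fin n, i ≠ j → x i ≠ x j) :
    phiDet (fun i => (r i)⁻¹ * s i) (fun i => (s i)⁻¹ * r i * x i) ≠ 0 ∧
      (phiDet (fun i => (r i)⁻¹ * s i) (fun i => (s i)⁻¹ * r i * x i)).order =
        ∑ i : Fin n, ∑ j ∈ Finset.Ioi i, (x i - x j).order :=
  order_det_phi_general r s x hr hs hx
end
end

section
/- Let F be a field, n ≥ 1, and let β = diag(x₁,…,x_n) with x₁,…,x_n ∈ F pairwise distinct. Then for n×n matrices X, Y over F, the block matrices [[0, X],[Y, 0]] and [[0, I_n],[β, 0]] commute if and only if there exist c₁,…,c_n ∈ F with X = diag(c₁,…,c_n) and Y = diag(c₁x₁,…,c_nx_n). In other words, the centralizer of γ = [[0, I_n],[β, 0]] in 𝔤₁ is the Cartan subspace 𝔞 = {(diag(c₁,…,c_n), diag(c₁x₁,…,c_nx_n)) : c_i ∈ F}. -/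
noncomputable section

open Matrix

/-- for `β = diag(x₁,…,xₙ)` with the `xᵢ` pairwise distinct, the block
matrices `[[0, X],[Y, 0]]` and `[[0, Iₙ],[β, 0]]` commute if and only if
`X = diag(c₁,…,cₙ)` and `Y = diag(c₁x₁,…,cₙxₙ)` for some `c₁,…,cₙ`; i.e. the
centralizer of `γ` in `𝔤₁` is the Cartan subspace `𝔞`. -/
theorem centralizer_eq_cartan {F : Type*} [Field F] {n : ℕ} (hn : 1 ≤ n)
    (x : Fin n → F) (hx : ∀ i j : Fin n, i ≠ j → x i ≠ x j)
    (X Y : Matrix (Fin n) (Fin n) F) :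
    Commute (Matrix.fromBlocks 0 X Y 0) (Matrix.fromBlocks 0 1 (Matrix.diagonal x) 0) ↔
      ∃ c : Fin n → F, X = Matrix.diagonal c ∧
        Y = Matrix.diagonal (fun i => c i * x i) := by
  have key : Commute (Matrix.fromBlocks 0 X Y 0) (Matrix.fromBlocks 0 1 (Matrix.diagonal x) 0)
      ↔ (X * Matrix.diagonal x = Y ∧ Y = Matrix.diagonal x * X) := by
    unfold Commute SemiconjBy
    rw [Matrix.fromBlocks_multiply, Matrix.fromBlocks_multiply]
    simp only [Matrix.mul_zero, Matrix.zero_mul, Matrix.mul_one, Matrix.one_mul,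
      add_zero, zero_add]
    rw [Matrix.fromBlocks_inj]
    tauto
  rw [key]
  constructor
  · rintro ⟨h1, h2⟩
    have hX : X = Matrix.diagonal (fun i => X i i) := by
      ext i j
      by_cases hij : i = j
      · subst hij; simp
      · have h3 : X * Matrix.diagonal x = Matrix.diagonal x * X := h1.trans h2
        have := congrFun (congrFun h3 i) j
        rw [Matrix.mul_diagonal, Matrix.diagonal_mul] at this
        have hxij := hx i j hij
        have : X i j * (x j - x i) = 0 := by ring_nf; linear_combination this
        rcases mul_eq_zero.mp this with h | h
        · simpa [Matrix.diagonal, hij] using h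
        · exact absurd (sub_eq_zero.mp h).symm hxij
    refine ⟨fun i => X i i, hX, ?_⟩
    rw [h2]
    conv_lhs => rw [hX]
    rw [Matrix.diagonal_mul_diagonal]
    ext i j
    simp [Matrix.diagonal_apply, mul_comm]
  · rintro ⟨c, hX, hY⟩
    subst hX; subst hY
    rw [Matrix.diagonal_mul_diagonal, Matrix.diagonal_mul_diagonal]
    constructor <;> (ext i j; simp [Matrix.diagonal_apply, mul_comm])
end
end

section
/- Let F be a field of characteristic different from 2, let n ≥ 1, let c₁,…,c_n ∈ F, and let x₁,…,x_n ∈ F be nonzero. Then the 2n×2n matrix M = [[0, diag(c₁,…,c_n)],[diag(c₁x₁,…,c_nx_n), 0]], regarded as an F-linear endomorphism of F^{2n}, is semisimple: every M-invariant subspace of F^{2n} has an M-invariant complement. -/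
open Matrix Polynomial

/-!
`M` squares to the diagonal matrix `diag(dᵢ)` with `dᵢ = cᵢ²xᵢ` in both blocks, and a column of `M`
vanishes whenever the corresponding `dᵢ` does. Hence `M` is annihilated by
`X · ∏ (X² - a)`, the product running over the nonzero values `a` of `d`. In characteristic `≠ 2`
this polynomial is separable, so `M` is semisimple.
-/

namespace Polynomial

variable {K : Type*} [Field K]

theorem isCoprime_X_X_sq_sub_C {a : K} (ha : a ≠ 0) : IsCoprime (X : K[X]) (X ^ 2 - C a) := by
  refine ⟨C a⁻¹ * X, -C a⁻¹, ?_⟩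
  have : (C a⁻¹ : K[X]) * C a = 1 := by rw [← C_mul, inv_mul_cancel₀ ha, C_1]
  linear_combination this

theorem isCoprime_X_sq_sub_C_of_ne {a b : K} (hab : a ≠ b) :
    IsCoprime (X ^ 2 - C a : K[X]) (X ^ 2 - C b) := by
  refine ⟨-C (a - b)⁻¹, C (a - b)⁻¹, ?_⟩
  have : (C (a - b)⁻¹ : K[X]) * (C a - C b) = 1 := by
    rw [← C_sub, ← C_mul, inv_mul_cancel₀ (sub_ne_zero.mpr hab), C_1]
  linear_combination this

theorem separable_X_mul_prod_X_sq_sub_C (h2 : (2 : K) ≠ 0) {S : Finset K} (hS : 0 ∉ S) :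
    (X * ∏ a ∈ S, (X ^ 2 - C a)).Separable := by
  have hS' : ∀ a ∈ S, a ≠ 0 := fun a ha h => hS (h ▸ ha)
  refine separable_X.mul ?_ (IsCoprime.prod_right fun a ha => isCoprime_X_X_sq_sub_C (hS' a ha))
  exact separable_prod' (fun a _ b _ hab => isCoprime_X_sq_sub_C_of_ne hab) fun a ha =>
    separable_X_pow_sub_C a (by norm_num [h2]) (hS' a ha)

end Polynomial

namespace Matrix

variable {ι R : Type*} [DecidableEq ι]

theorem fromBlocks_zero_diagonal_apply_eq_zero [MulZeroClass R] [NoZeroDivisors R] {a b : ι → R}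
    (hab : ∀ k, a k = 0 ↔ b k = 0) {k : ι ⊕ ι} (hk : Sum.elim (a * b) (b * a) k = 0)
    (j : ι ⊕ ι) : fromBlocks 0 (diagonal a) (diagonal b) 0 j k = 0 := by
  rcases j with j | j <;> rcases k with k | k <;>
    simp_all [diagonal_apply, mul_eq_zero, or_self]

variable [Fintype ι]

theorem fromBlocks_zero_diagonal_mul_self [Semiring R] (a b : ι → R) :
    fromBlocks 0 (diagonal a) (diagonal b) 0 * fromBlocks 0 (diagonal a) (diagonal b) 0 =
      diagonal (Sum.elim (a * b) (b * a)) := by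
  simp [fromBlocks_multiply, diagonal_mul_diagonal, ← fromBlocks_diagonal]

variable [CommRing R]

theorem aeval_diagonal (d : ι → R) (p : R[X]) :
    aeval (diagonal d) p = diagonal fun k => p.eval (d k) := by
  rw [← diagonalAlgHom_apply (R := R), aeval_algHom_apply, aeval_pi_apply]
  simp

theorem aeval_prod_X_sq_sub_C_of_mul_self_eq_diagonal {M : Matrix ι ι R} {d : ι → R}
    (hM : M * M = diagonal d) (S : Finset R) :
    aeval M (∏ a ∈ S, (X ^ 2 - C a)) = diagonal fun k => ∏ a ∈ S, (d k - a) := by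
  have hcomp : (∏ a ∈ S, (X - C a)).comp (X ^ 2) = ∏ a ∈ S, (X ^ 2 - C a : R[X]) := by
    simp [prod_comp]
  rw [← hcomp, aeval_comp, map_pow, aeval_X, sq, hM, aeval_diagonal]
  simp [eval_prod]

theorem aeval_X_mul_prod_X_sq_sub_C_eq_zero [DecidableEq R] {M : Matrix ι ι R} {d : ι → R}
    (hM : M * M = diagonal d) (hcol : ∀ k, d k = 0 → ∀ j, M j k = 0) :
    aeval M (X * ∏ a ∈ (Finset.univ.image d).erase 0, (X ^ 2 - C a)) = 0 := by
  rw [map_mul, aeval_X, aeval_prod_X_sq_sub_C_of_mul_self_eq_diagonal hM]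
  ext j k
  rw [mul_diagonal, zero_apply]
  by_cases hk : d k = 0
  · rw [hcol k hk j, zero_mul]
  · refine mul_eq_zero_of_right _ (Finset.prod_eq_zero (i := d k) ?_ (sub_self _))
    exact Finset.mem_erase.2 ⟨hk, Finset.mem_image_of_mem d (Finset.mem_univ k)⟩

theorem isSemisimple_toLin'_of_mul_self_eq_diagonal {K : Type*} [Field K] (h2 : (2 : K) ≠ 0)
    {M : Matrix ι ι K} {d : ι → K} (hM : M * M = diagonal d)
    (hcol : ∀ k, d k = 0 → ∀ j, M j k = 0) : Module.End.IsSemisimple (toLin' M) := by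
  classical
  refine Module.End.isSemisimple_of_squarefree_aeval_eq_zero
    (separable_X_mul_prod_X_sq_sub_C h2 (Finset.notMem_erase 0 (Finset.univ.image d))).squarefree ?_
  rw [show toLin' M = toLinAlgEquiv' M from rfl, aeval_algHom_apply,
    aeval_X_mul_prod_X_sq_sub_C_eq_zero hM hcol, map_zero]

end Matrix

theorem cartan_element_semisimple_general {F : Type*} [Field F] (h2 : (2 : F) ≠ 0)
    {n : ℕ} (c x : Fin n → F) (hx : ∀ i, x i ≠ 0) :
    ∀ W : Submodule F ((Fin n ⊕ Fin n) → F),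
      (∀ w ∈ W, Matrix.toLin'
          (Matrix.fromBlocks 0 (Matrix.diagonal c)
            (Matrix.diagonal fun i => c i * x i) 0) w ∈ W) →
      ∃ W' : Submodule F ((Fin n ⊕ Fin n) → F),
        (∀ w ∈ W', Matrix.toLin'
            (Matrix.fromBlocks 0 (Matrix.diagonal c)
              (Matrix.diagonal fun i => c i * x i) 0) w ∈ W') ∧
        IsCompl W W' := by
  have hc : ∀ k, c k = 0 ↔ c k * x k = 0 := fun k => by simp [hx k]
  have hss := isSemisimple_toLin'_of_mul_self_eq_diagonal h2
    (fromBlocks_zero_diagonal_mul_self c fun i => c i * x i)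
    fun _ hk => fromBlocks_zero_diagonal_apply_eq_zero hc hk
  intro W hW
  exact Module.End.isSemisimple_iff.1 hss W hW

/-- in characteristic `≠ 2`, with `x₁,…,xₙ` nonzero, the matrix
`M = [[0, diag(cᵢ)],[diag(cᵢxᵢ), 0]]`, viewed as a linear endomorphism of `F^{2n}`,
is semisimple: every `M`-invariant subspace has an `M`-invariant complement. -/
theorem cartan_element_semisimple {F : Type*} [Field F] (h2 : (2 : F) ≠ 0)
    {n : ℕ} (hn : 1 ≤ n) (c x : Fin n → F) (hx : ∀ i, x i ≠ 0) :
    ∀ W : Submodule F ((Fin n ⊕ Fin n) → F),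
      (∀ w ∈ W, Matrix.toLin'
          (Matrix.fromBlocks 0 (Matrix.diagonal c)
            (Matrix.diagonal fun i => c i * x i) 0) w ∈ W) →
      ∃ W' : Submodule F ((Fin n ⊕ Fin n) → F),
        (∀ w ∈ W', Matrix.toLin'
            (Matrix.fromBlocks 0 (Matrix.diagonal c)
              (Matrix.diagonal fun i => c i * x i) 0) w ∈ W') ∧
        IsCompl W W' :=
  cartan_element_semisimple_general h2 c x hx
end

section
/- Let R be a commutative ring, n ≥ 1, let u be a unipotent upper triangular n×n matrix over R (so u is invertible), and let D be a diagonal n×n matrix over R. Then for all indices i, j with j − i ≤ 1 (i.e. on the diagonal and the first superdiagonal), the (i,j) entry of u⁻¹Du equals the (i,j) entry of D + (u⁻¹ − I)D − D(u⁻¹ − I). -/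
noncomputable section

open Matrix

/-- for `u` unipotent upper triangular and `D` diagonal, the entries of
`u⁻¹ D u` on the diagonals `j − i ≤ 1` agree with those of
`D + ((u⁻¹ − 1) D − D (u⁻¹ − 1))`. -/
theorem conj_linearization {R : Type*} [CommRing R] {n : ℕ} (hn : 1 ≤ n)
    (u : Matrix (Fin n) (Fin n) R) (hu : IsUnipotentUpper u) (d : Fin n → R) :
    ∀ i j : Fin n, (j : ℕ) ≤ (i : ℕ) + 1 →
      (u⁻¹ * Matrix.diagonal d * u) i j =
        (Matrix.diagonal d +
          ((u⁻¹ - 1) * Matrix.diagonal d - Matrix.diagonal d * (u⁻¹ - 1))) i j := by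
  obtain ⟨hlow, hdiag⟩ := hu
  have hbt : u.BlockTriangular id := fun i j h => hlow i j h
  have hdet : u.det = 1 := by
    rw [Matrix.det_of_upperTriangular hbt]
    simp [hdiag]
  have hunit : IsUnit u.det := by rw [hdet]; exact isUnit_one
  have hvu : u⁻¹ * u = 1 := Matrix.nonsing_inv_mul u hunit
  have hinvu : Invertible u := u.invertibleOfIsUnitDet hunit
  have hvbt : u⁻¹.BlockTriangular id := by
    have := Matrix.blockTriangular_inv_of_blockTriangular (M := u) hbt
    simpa [Matrix.invOf_eq_nonsing_inv] using this
  have hvlow : ∀ i j : Fin n, j < i → u⁻¹ i j = 0 := fun i j h => hvbt h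
  -- diagonal entries of the inverse are 1
  have hvdiag : ∀ i : Fin n, u⁻¹ i i = 1 := by
    intro i
    have h := congrFun (congrFun hvu i) i
    rw [Matrix.mul_apply] at h
    rw [Finset.sum_eq_single i] at h
    · simpa [hdiag i] using h
    · intro k _ hk
      rcases lt_or_gt_of_ne hk with hlt | hgt
      · rw [hvlow i k hlt]; ring
      · rw [hlow k i hgt]; ring
    · simp
  intro i j hij
  rcases lt_trichotomy j i with hji | heq | hij'
  · -- strictly below diagonal: everything vanishes
    have h1 : (u⁻¹ * Matrix.diagonal d * u) i j = 0 := by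
      rw [Matrix.mul_apply]
      apply Finset.sum_eq_zero
      intro k _
      rcases le_or_gt k j with hk | hk
      · rw [Matrix.mul_diagonal, hvlow i k (lt_of_le_of_lt hk hji)]; ring
      · rw [hlow k j hk]; ring
    rw [h1]
    have hne : i ≠ j := hji.ne'
    simp [Matrix.sub_apply, Matrix.diagonal_apply_ne _ hne, Matrix.one_apply_ne hne,
      hvlow i j hji]
  · -- diagonal
    subst heq
    rw [Matrix.mul_apply]
    rw [Finset.sum_eq_single j]
    · simp [Matrix.mul_diagonal, hvdiag, hdiag]
    · intro k _ hk
      rcases lt_or_gt_of_ne hk with hlt | hgt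
      · rw [Matrix.mul_diagonal, hvlow j k hlt]; ring
      · rw [hlow k j hgt]; ring
    · simp
  · -- first superdiagonal: (j : ℕ) = i + 1
    have hji : (j : ℕ) = (i : ℕ) + 1 := le_antisymm hij (Nat.succ_le_of_lt hij')
    have hne : i ≠ j := hij'.ne
    -- u i j = - u⁻¹ i j
    have hkey : u i j = - u⁻¹ i j := by
      have h := congrFun (congrFun hvu i) j
      rw [Matrix.mul_apply] at h
      have hz : ∀ k ∈ Finset.univ, k ∉ ({i, j} : Finset (Fin n)) →
          u⁻¹ i k * u k j = 0 := by
        intro k _ hk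
        simp only [Finset.mem_insert, Finset.mem_singleton] at hk
        push_neg at hk
        rcases lt_or_ge k j with hkj | hkj
        · have hki : k < i := by omega
          rw [hvlow i k hki]; ring
        · have : j < k := lt_of_le_of_ne hkj (Ne.symm hk.2)
          rw [hlow k j this]; ring
      rw [← Finset.sum_subset (Finset.subset_univ ({i, j} : Finset (Fin n))) hz] at h
      rw [Finset.sum_pair hne] at h
      rw [Matrix.one_apply_ne hne, hvdiag, hdiag] at h
      linear_combination h
    have h1 : (u⁻¹ * Matrix.diagonal d * u) i j = u⁻¹ i j * d j - d i * u⁻¹ i j := by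
      rw [Matrix.mul_apply]
      have hz : ∀ k ∈ Finset.univ, k ∉ ({i, j} : Finset (Fin n)) →
          (u⁻¹ * Matrix.diagonal d) i k * u k j = 0 := by
        intro k _ hk
        simp only [Finset.mem_insert, Finset.mem_singleton] at hk
        push_neg at hk
        rcases lt_or_ge k j with hkj | hkj
        · have hki : k < i := by omega
          rw [Matrix.mul_diagonal, hvlow i k hki]; ring
        · have : j < k := lt_of_le_of_ne hkj (Ne.symm hk.2)
          rw [hlow k j this]; ring
      rw [← Finset.sum_subset (Finset.subset_univ ({i, j} : Finset (Fin n))) hz]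
      rw [Finset.sum_pair hne, Matrix.mul_diagonal, Matrix.mul_diagonal,
        hvdiag, hdiag, hkey]
      ring
    rw [h1]
    simp only [Matrix.add_apply, Matrix.sub_apply, Matrix.mul_diagonal,
      Matrix.diagonal_mul, Matrix.diagonal_apply_ne _ hne, Matrix.one_apply_ne hne]
    ring
end
end

section
/- Let n ≥ 2, let r₁,…,r_n, s₁,…,s_n be nonzero elements of a field F, and let x₁,…,x_n ∈ F be pairwise distinct. Then for any f₁,…,f_{n−1}, g₁,…,g_{n−1} ∈ F there exist unipotent upper triangular matrices v, w ∈ GL_n(F) such that, for all 1 ≤ i ≤ n−1, the (i, i+1) entry of v⁻¹·diag(r₁⁻¹s₁,…,r_n⁻¹s_n)·w equals f_i and the (i, i+1) entry of w⁻¹·diag(s₁⁻¹r₁x₁,…,s_n⁻¹r_nx_n)·v equals g_i. -/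
/-!
For unipotent upper triangular `v, w` and diagonal `D = diag(dᵢ)`, the `(i, i+1)` entry of
`v⁻¹ D w` is `dᵢ wᵢ,ᵢ₊₁ - vᵢ,ᵢ₊₁ dᵢ₊₁`, since `v⁻¹` has superdiagonal `-vᵢ,ᵢ₊₁`. So the conditions
decouple into one `2 × 2` linear system per `i` in the unknowns `vᵢ,ᵢ₊₁, wᵢ,ᵢ₊₁`; with
`dᵢ = rᵢ⁻¹sᵢ` and `eᵢ = sᵢ⁻¹rᵢxᵢ` its determinant is `dᵢ₊₁eᵢ₊₁ - dᵢeᵢ = xᵢ₊₁ - xᵢ ≠ 0`.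
Solving it for each `i` and taking `v, w` bidiagonal with those entries proves the claim.
-/

noncomputable section

open Matrix

namespace Matrix

section Triangular

variable {ι R : Type*} [LinearOrder ι] [Fintype ι] [NonUnitalNonAssocSemiring R]
  {A B : Matrix ι ι R}

theorem IsUpperTriangular.mul_apply_self (hA : A.IsUpperTriangular) (hB : B.IsUpperTriangular)
    (i : ι) : (A * B) i i = A i i * B i i := by
  rw [mul_apply, Finset.sum_eq_single i _ (by simp)]
  intro k _ hki
  rcases hki.lt_or_gt with hk | hk
  · rw [hA hk, zero_mul]
  · rw [hB hk, mul_zero]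

theorem IsUpperTriangular.mul_apply_of_covBy (hA : A.IsUpperTriangular)
    (hB : B.IsUpperTriangular) {i j : ι} (hij : i ⋖ j) :
    (A * B) i j = A i i * B i j + A i j * B j j := by
  rw [mul_apply, Finset.sum_eq_add i j hij.ne (fun k _ hk => ?_) (by simp) (by simp)]
  rcases hk.1.lt_or_gt with hki | hik
  · rw [hA hki, zero_mul]
  · rw [hB ((hij.ge_of_gt hik).lt_of_ne' hk.2), mul_zero]

end Triangular

end Matrix

section Unipotent

variable {R : Type*} [CommRing R] {n : ℕ} {u v : Matrix (Fin n) (Fin n) R}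

theorem IsUnipotentUpper.isUpperTriangular (hu : IsUnipotentUpper u) : u.IsUpperTriangular :=
  fun i j hji => hu.1 i j hji

theorem IsUnipotentUpper.det_eq_one (hu : IsUnipotentUpper u) : u.det = 1 := by
  simp [det_of_isUpperTriangular hu.isUpperTriangular, hu.2]

theorem IsUnipotentUpper.inv (hu : IsUnipotentUpper u) : IsUnipotentUpper u⁻¹ := by
  have : Invertible u := u.invertibleOfIsUnitDet (by simp [hu.det_eq_one])
  have htri : u⁻¹.IsUpperTriangular :=
    blockTriangular_inv_of_blockTriangular hu.isUpperTriangular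
  refine ⟨fun i j hji => htri hji, fun i => ?_⟩
  simpa [hu.2, nonsing_inv_mul u (by simp [hu.det_eq_one])] using
    (htri.mul_apply_self hu.isUpperTriangular i).symm

theorem IsUnipotentUpper.inv_apply_of_covBy (hu : IsUnipotentUpper u) {i j : Fin n}
    (hij : i ⋖ j) : u⁻¹ i j = -u i j := by
  have hone := hu.inv.isUpperTriangular.mul_apply_of_covBy hu.isUpperTriangular hij
  rw [nonsing_inv_mul u (by simp [hu.det_eq_one]), one_apply_ne hij.ne, hu.inv.2, hu.2] at hone
  linear_combination -hone

theorem IsUnipotentUpper.inv_mul_diagonal_mul_apply_of_covBy (hu : IsUnipotentUpper u)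
    (hv : IsUnipotentUpper v) (d : Fin n → R) {i j : Fin n} (hij : i ⋖ j) :
    (u⁻¹ * diagonal d * v) i j = d i * v i j - u i j * d j := by
  have htri : (u⁻¹ * diagonal d).IsUpperTriangular :=
    hu.inv.isUpperTriangular.mul (blockTriangular_diagonal d)
  rw [htri.mul_apply_of_covBy hv.isUpperTriangular hij, mul_diagonal, mul_diagonal,
    hu.inv.2, hv.2, hu.inv_apply_of_covBy hij]
  ring

def bidiagonal (a : Fin n → R) : Matrix (Fin n) (Fin n) R :=
  of fun i j => if i = j then 1 else if (j : ℕ) = i + 1 then a i else 0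

theorem isUnipotentUpper_bidiagonal (a : Fin n → R) : IsUnipotentUpper (bidiagonal a) := by
  refine ⟨fun i j hji => ?_, fun i => by simp [bidiagonal]⟩
  have : (j : ℕ) < i := hji
  simp only [bidiagonal, of_apply]
  rw [if_neg (by omega), if_neg (by omega)]

theorem bidiagonal_apply_of_covBy (a : Fin n → R) {i j : Fin n} (hij : i ⋖ j) :
    bidiagonal a i j = a i := by
  have : (i : ℕ) + 1 = j := Nat.covBy_iff_add_one_eq.1 (Fin.covBy_iff.1 hij)
  simp [bidiagonal, hij.ne, this]

end Unipotent

theorem exists_sub_mul_eq_and_sub_mul_eq {F : Type*} [Field F] {p p' q q' : F}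
    (h : p * q ≠ p' * q') (f g : F) :
    ∃ a b : F, p * b - a * p' = f ∧ q * a - b * q' = g := by
  have hΔ : p' * q' - p * q ≠ 0 := sub_ne_zero.2 h.symm
  refine ⟨(-(f * q') - p * g) * (p' * q' - p * q)⁻¹, (-(p' * g) - q * f) * (p' * q' - p * q)⁻¹,
    ?_, ?_⟩
  · linear_combination f * mul_inv_cancel₀ hΔ
  · linear_combination g * mul_inv_cancel₀ hΔ

theorem superdiagonal_surjective_general {F : Type*} [Field F] {n : ℕ}
    (r s x : Fin n → F) (hr : ∀ i, r i ≠ 0) (hs : ∀ i, s i ≠ 0)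
    (hx : ∀ i j : Fin n, i ≠ j → x i ≠ x j) (f g : Fin n → F) :
    ∃ v w : Matrix (Fin n) (Fin n) F, IsUnipotentUpper v ∧ IsUnipotentUpper w ∧
      ∀ i j : Fin n, (j : ℕ) = (i : ℕ) + 1 →
        (v⁻¹ * Matrix.diagonal (fun i => (r i)⁻¹ * s i) * w) i j = f i ∧
        (w⁻¹ * Matrix.diagonal (fun i => (s i)⁻¹ * r i * x i) * v) i j = g i := by
  set d : Fin n → F := fun i => (r i)⁻¹ * s i
  set e : Fin n → F := fun i => (s i)⁻¹ * r i * x i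
  have hde (i : Fin n) : d i * e i = x i := by
    simp only [d, e]
    field_simp [hr i, hs i]
  have hsolve (i : Fin n) : ∃ a b : F, ∀ j, i ⋖ j →
      d i * b - a * d j = f i ∧ e i * a - b * e j = g i := by
    by_cases hj : ∃ j, i ⋖ j
    · obtain ⟨j, hij⟩ := hj
      have hdet : d i * e i ≠ d j * e j := by
        rw [hde, hde]
        exact hx i j hij.ne
      obtain ⟨a, b, hab⟩ := exists_sub_mul_eq_and_sub_mul_eq hdet (f i) (g i)
      exact ⟨a, b, fun k hik => hij.unique_right hik ▸ hab⟩
    · exact ⟨0, 0, fun j hij => (hj ⟨j, hij⟩).elim⟩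
  choose a b hab using hsolve
  refine ⟨bidiagonal a, bidiagonal b, isUnipotentUpper_bidiagonal a,
    isUnipotentUpper_bidiagonal b, fun i j hij => ?_⟩
  have hcov : i ⋖ j := Fin.covBy_iff.2 (Nat.covBy_iff_add_one_eq.2 hij.symm)
  simp only [(isUnipotentUpper_bidiagonal _).inv_mul_diagonal_mul_apply_of_covBy
    (isUnipotentUpper_bidiagonal _) _ hcov, bidiagonal_apply_of_covBy _ hcov]
  exact hab i j hcov

/-- for `rᵢ, sᵢ` nonzero and `xᵢ` pairwise distinct, and arbitrary target
values `fᵢ, gᵢ`, there are unipotent upper triangular `v, w` such that for every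
superdiagonal position `(i, j)` (i.e. `j = i + 1`), the `(i,j)` entry of
`v⁻¹ · diag(rᵢ⁻¹sᵢ) · w` is `fᵢ` and the `(i,j)` entry of `w⁻¹ · diag(sᵢ⁻¹rᵢxᵢ) · v`
is `gᵢ`. -/
theorem superdiagonal_surjective {F : Type*} [Field F] {n : ℕ} (hn : 2 ≤ n)
    (r s x : Fin n → F) (hr : ∀ i, r i ≠ 0) (hs : ∀ i, s i ≠ 0)
    (hx : ∀ i j : Fin n, i ≠ j → x i ≠ x j) (f g : Fin n → F) :
    ∃ v w : Matrix (Fin n) (Fin n) F, IsUnipotentUpper v ∧ IsUnipotentUpper w ∧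
      ∀ i j : Fin n, (j : ℕ) = (i : ℕ) + 1 →
        (v⁻¹ * Matrix.diagonal (fun i => (r i)⁻¹ * s i) * w) i j = f i ∧
        (w⁻¹ * Matrix.diagonal (fun i => (s i)⁻¹ * r i * x i) * v) i j = g i :=
  superdiagonal_surjective_general r s x hr hs hx f g
end
end
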